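/- Assume that the set Ω ⊆ ℝⁿ is locally closed at z̄ ∈ Ω. Then Ω is strictly smooth at z̄ if and only if both T^P_Ω(z̄) and N_Ω(z̄) are linear subspaces satisfying T^P_Ω(z̄)^⊥ = N_Ω(z̄). Moreover, if Ω is strictly smooth at z̄ then Ω is normally regular at z̄. -/

import Mathlib

open Filter Topology Metric Set
open scoped RealInnerProductSpace NNReal ENNReal

noncomputable section

/-- Euclidean space `ℝⁿ`. -/
abbrev Euc (n : ℕ) : Type := EuclideanSpace ℝ (Fin n)

section NormedDefs

variable {X Y : Type*} [NormedAddCommGroup X] [NormedSpace ℝ X]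
  [NormedAddCommGroup Y] [NormedSpace ℝ Y]

/-- The (Bouligand) tangent cone to `Ω` at `z`. -/
def tanCone (Ω : Set X) (z : X) : Set X :=
  {w | ∃ (t : ℕ → ℝ) (wk : ℕ → X), (∀ k, 0 < t k) ∧ Tendsto t atTop (𝓝 0) ∧
      Tendsto wk atTop (𝓝 w) ∧ ∀ k, z + t k • wk k ∈ Ω}

/-- The regular (Clarke) tangent cone to `Ω` at `z`. -/
def clarkeCone (Ω : Set X) (z : X) : Set X :=
  {w | ∀ (zk : ℕ → X) (t : ℕ → ℝ), (∀ k, zk k ∈ Ω) → Tendsto zk atTop (𝓝 z) →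
      (∀ k, 0 < t k) → Tendsto t atTop (𝓝 0) →
      ∃ wk : ℕ → X, Tendsto wk atTop (𝓝 w) ∧ ∀ k, zk k + t k • wk k ∈ Ω}

/-- The paratingent cone to `Ω` at `z`. -/
def paraCone (Ω : Set X) (z : X) : Set X :=
  {w | ∃ (zk : ℕ → X) (t : ℕ → ℝ) (wk : ℕ → X), (∀ k, zk k ∈ Ω) ∧
      Tendsto zk atTop (𝓝 z) ∧ (∀ k, 0 < t k) ∧ Tendsto t atTop (𝓝 0) ∧
      Tendsto wk atTop (𝓝 w) ∧ ∀ k, zk k + t k • wk k ∈ Ω}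

/-- `Ω` is strictly smooth at `z` if the Clarke tangent cone and the paratingent
cone coincide there. -/
def StrictlySmoothAt (Ω : Set X) (z : X) : Prop := clarkeCone Ω z = paraCone Ω z

/-- `Ω` is geometrically derivable at `z`. -/
def GeomDerivableAt (Ω : Set X) (z : X) : Prop :=
  ∀ w ∈ tanCone Ω z, ∀ t : ℕ → ℝ, (∀ k, 0 < t k) → Tendsto t atTop (𝓝 0) →
    ∃ wk : ℕ → X, Tendsto wk atTop (𝓝 w) ∧ ∀ k, z + t k • wk k ∈ Ω

/-- `Ω` is locally closed at `z`. -/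
def LocallyClosedAt (Ω : Set X) (z : X) : Prop :=
  ∃ V : Set X, V ∈ 𝓝 z ∧ IsClosed V ∧ IsClosed (Ω ∩ V)

/-- The set `s` is a linear subspace. -/
def IsLinearSubspace (s : Set X) : Prop := ∃ S : Submodule ℝ X, (S : Set X) = s

/-- The set `s` is a linear subspace of dimension `d`. -/
def HasDim (s : Set X) (d : ℕ) : Prop :=
  ∃ S : Submodule ℝ X, (S : Set X) = s ∧ Module.finrank ℝ S = d

/-- The graph of a set-valued mapping. -/
def gphOf (Fm : X → Set Y) : Set (X × Y) := {p | p.2 ∈ Fm p.1}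

/-- The graph of a single-valued mapping defined on `U`. -/
def gphOn (f : X → Y) (U : Set X) : Set (X × Y) := {p | p.1 ∈ U ∧ p.2 = f p.1}

/-- `f` (defined on `U`) is strictly continuous (locally Lipschitz) at `xb`. -/
def StrictlyContinuousAt' (f : X → Y) (U : Set X) (xb : X) : Prop :=
  ∃ U' ∈ 𝓝 xb, U' ⊆ U ∧ ∃ κ : ℝ, 0 ≤ κ ∧
    ∀ x ∈ U', ∀ x' ∈ U', ‖f x - f x'‖ ≤ κ * ‖x - x'‖

/-- `f` (defined on `U`) is calm at `xb`. -/
def CalmAt' (f : X → Y) (U : Set X) (xb : X) : Prop :=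
  ∃ U' ∈ 𝓝 xb, U' ⊆ U ∧ ∃ κ : ℝ, 0 ≤ κ ∧ ∀ x ∈ U', ‖f x - f xb‖ ≤ κ * ‖x - xb‖

/-- `f` (defined on `U`) is strictly differentiable at `xb`. -/
def StrictDiffOnAt (f : X → Y) (U : Set X) (xb : X) : Prop :=
  ∃ A : X →L[ℝ] Y, ∀ ε : ℝ, 0 < ε → ∃ δ > 0, ∀ x ∈ U, ∀ x' ∈ U,
    ‖x - xb‖ < δ → ‖x' - xb‖ < δ → ‖f x' - f x - A (x' - x)‖ ≤ ε * ‖x' - x‖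

/-- `f` (defined on `U`) is Fréchet differentiable at `xb`. -/
def FrechetDiffOnAt (f : X → Y) (U : Set X) (xb : X) : Prop :=
  ∃ A : X →L[ℝ] Y, ∀ ε : ℝ, 0 < ε → ∃ δ > 0, ∀ x ∈ U,
    ‖x - xb‖ < δ → ‖f x - f xb - A (x - xb)‖ ≤ ε * ‖x - xb‖

/-- The B-Jacobian (Bouligand limiting Jacobian) of `f` at `xb`. -/
def BJacobian (f : X → Y) (U : Set X) (xb : X) : Set (X →L[ℝ] Y) :=
  {A | ∃ (xk : ℕ → X) (Ak : ℕ → X →L[ℝ] Y),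
      (∀ k, xk k ∈ U ∧ HasFDerivAt f (Ak k) (xk k)) ∧
      Tendsto xk atTop (𝓝 xb) ∧ Tendsto Ak atTop (𝓝 A)}

/-- `Ω ⊆ X` is a Lipschitz manifold of dimension `d` (and codimension `c`) around `z`:
up to a `C¹` change of coordinates `Φ`, `Ω` locally coincides with the graph of a
Lipschitz mapping `f : U → ℝᶜ`, `U ⊆ ℝᵈ` open. -/
def IsLipschitzManifoldAt (Ω : Set X) (d c : ℕ) (z : X) : Prop :=
  ∃ (W : Set X) (Φ : X → Euc d × Euc c) (Ψ : Euc d × Euc c → X)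
    (U : Set (Euc d)) (f : Euc d → Euc c) (K : ℝ≥0),
    IsOpen W ∧ z ∈ W ∧ IsOpen (Φ '' W) ∧
    ContDiffOn ℝ 1 Φ W ∧ ContDiffOn ℝ 1 Ψ (Φ '' W) ∧
    (∀ x ∈ W, Ψ (Φ x) = x) ∧ (∀ y ∈ Φ '' W, Φ (Ψ y) = y) ∧
    IsOpen U ∧ LipschitzOnWith K f U ∧
    Φ '' (Ω ∩ W) = {p | p.1 ∈ U ∧ p.2 = f p.1}

/-- As `IsLipschitzManifoldAt`, with the Lipschitz mapping `f` moreover strictly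
differentiable at the transformed reference point. -/
def IsGraphStrictDiffAt (Ω : Set X) (d c : ℕ) (z : X) : Prop :=
  ∃ (W : Set X) (Φ : X → Euc d × Euc c) (Ψ : Euc d × Euc c → X)
    (U : Set (Euc d)) (f : Euc d → Euc c) (K : ℝ≥0),
    IsOpen W ∧ z ∈ W ∧ IsOpen (Φ '' W) ∧
    ContDiffOn ℝ 1 Φ W ∧ ContDiffOn ℝ 1 Ψ (Φ '' W) ∧
    (∀ x ∈ W, Ψ (Φ x) = x) ∧ (∀ y ∈ Φ '' W, Φ (Ψ y) = y) ∧
    IsOpen U ∧ LipschitzOnWith K f U ∧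
    Φ '' (Ω ∩ W) = {p | p.1 ∈ U ∧ p.2 = f p.1} ∧
    StrictDiffOnAt f U (Φ z).1

/-- Strong metric subregularity of a set-valued mapping at `(xb, yb)`. -/
def StronglySubregAt (Fm : X → Set Y) (xb : X) (yb : Y) : Prop :=
  ∃ κ : ℝ≥0, ∃ U ∈ 𝓝 xb, ∀ x ∈ U,
    (‖x - xb‖₊ : ℝ≥0∞) ≤ (κ : ℝ≥0∞) * EMetric.infEdist yb (Fm x)

/-- Metric regularity of a set-valued mapping around `(xb, yb)`. -/
def MetricallyRegularAround (Fm : X → Set Y) (xb : X) (yb : Y) : Prop :=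
  ∃ κ : ℝ≥0, ∃ U ∈ 𝓝 xb, ∃ V ∈ 𝓝 yb, ∀ x ∈ U, ∀ y ∈ V,
    EMetric.infEdist x {x' | y ∈ Fm x'} ≤ (κ : ℝ≥0∞) * EMetric.infEdist y (Fm x)

/-- Strong metric regularity of a set-valued mapping around `(xb, yb)`. -/
def StronglyRegularAround (Fm : X → Set Y) (xb : X) (yb : Y) : Prop :=
  MetricallyRegularAround Fm xb yb ∧
  ∃ (U' : Set X) (V' : Set Y) (h : Y → X), IsOpen U' ∧ IsOpen V' ∧
    xb ∈ U' ∧ yb ∈ V' ∧ h yb = xb ∧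
    gphOf Fm ∩ (U' ×ˢ V') = {p | p.2 ∈ V' ∧ p.1 = h p.2}

end NormedDefs

section InnerDefs

variable {E F : Type*} [NormedAddCommGroup E] [InnerProductSpace ℝ E]
  [NormedAddCommGroup F] [InnerProductSpace ℝ F]

/-- The regular (Fréchet) normal cone: the polar of the tangent cone. -/
def regNormal (Ω : Set E) (z : E) : Set E := {v | ∀ w ∈ tanCone Ω z, ⟪v, w⟫ ≤ 0}

/-- The limiting (Mordukhovich) normal cone. -/
def limNormal (Ω : Set E) (z : E) : Set E :=
  {v | ∃ zk vk : ℕ → E, (∀ k, zk k ∈ Ω) ∧ Tendsto zk atTop (𝓝 z) ∧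
      (∀ k, vk k ∈ regNormal Ω (zk k)) ∧ Tendsto vk atTop (𝓝 v)}

/-- `Ω` is normally regular at `z`. -/
def NormallyRegularAt (Ω : Set E) (z : E) : Prop := regNormal Ω z = limNormal Ω z

/-- The orthogonal complement (as a set) of a set. -/
def orthSet (s : Set E) : Set E := {v | ∀ w ∈ s, ⟪v, w⟫ = 0}

/-- `Ω` is semismooth* at `zb`. -/
def SemismoothStarAt (Ω : Set E) (zb : E) : Prop :=
  ∀ ε : ℝ, 0 < ε → ∃ δ > 0, ∀ z ∈ Ω, ‖z - zb‖ < δ → ∀ v ∈ limNormal Ω z,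
    |⟪v, z - zb⟫| ≤ ε * ‖z - zb‖ * ‖v‖

/-- The canonical inner product of the product of two inner product spaces. -/
def inner2 (p q : E × F) : ℝ := ⟪p.1, q.1⟫ + ⟪p.2, q.2⟫

/-- The regular normal cone for subsets of a product space. -/
def regNormal2 (Ω : Set (E × F)) (z : E × F) : Set (E × F) :=
  {v | ∀ w ∈ tanCone Ω z, inner2 v w ≤ 0}

/-- The limiting normal cone for subsets of a product space. -/
def limNormal2 (Ω : Set (E × F)) (z : E × F) : Set (E × F) :=
  {v | ∃ zk vk : ℕ → E × F, (∀ k, zk k ∈ Ω) ∧ Tendsto zk atTop (𝓝 z) ∧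
      (∀ k, vk k ∈ regNormal2 Ω (zk k)) ∧ Tendsto vk atTop (𝓝 v)}

/-- Normal regularity for subsets of a product space. -/
def NormallyRegular2At (Ω : Set (E × F)) (z : E × F) : Prop :=
  regNormal2 Ω z = limNormal2 Ω z

/-- Orthogonal complement (as a set) in a product space. -/
def orthSet2 (s : Set (E × F)) : Set (E × F) := {v | ∀ w ∈ s, inner2 v w = 0}

/-- The graph of the limiting coderivative of a mapping with graph `Γ` at `z`:
`{(y*, x*) : (x*, -y*) ∈ N_Γ(z)}`. -/
def coderivGraph (Γ : Set (E × F)) (z : E × F) : Set (F × E) :=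
  {q | (q.2, -q.1) ∈ limNormal2 Γ z}

/-- The semismooth* property for subsets of a product space (i.e. for mappings). -/
def SemismoothStar2At (Ω : Set (E × F)) (zb : E × F) : Prop :=
  ∀ ε : ℝ, 0 < ε → ∃ δ > 0, ∀ z ∈ Ω, ‖z - zb‖ < δ → ∀ v ∈ limNormal2 Ω z,
    |inner2 v (z - zb)| ≤ ε * ‖z - zb‖ * ‖v‖

/-- The regular subdifferential of an extended-real-valued function. -/
def regSubdiff (φ : E → EReal) (xb : E) : Set E :=
  {v | φ xb ≠ ⊤ ∧ φ xb ≠ ⊥ ∧ ∀ ε : ℝ, 0 < ε → ∃ δ > 0, ∀ x, ‖x - xb‖ < δ →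
      φ xb + ((⟪v, x - xb⟫ - ε * ‖x - xb‖ : ℝ) : EReal) ≤ φ x}

/-- The limiting (Mordukhovich) subdifferential. -/
def limSubdiff (φ : E → EReal) (xb : E) : Set E :=
  {v | ∃ xk vk : ℕ → E, Tendsto xk atTop (𝓝 xb) ∧
      Tendsto (fun k => φ (xk k)) atTop (𝓝 (φ xb)) ∧
      (∀ k, vk k ∈ regSubdiff φ (xk k)) ∧ Tendsto vk atTop (𝓝 v)}

/-- `φ` is prox-regular at `xb` for `vb` with parameters `r ≥ 0` and `ε > 0`. -/
def ProxRegular (φ : E → EReal) (xb vb : E) (r ε : ℝ) : Prop :=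
  ∀ x' x v, ‖x' - xb‖ < ε → v ∈ limSubdiff φ x → ‖x - xb‖ < ε → ‖v - vb‖ < ε →
    φ x < φ xb + (ε : EReal) →
    φ x + ((⟪v, x' - x⟫ - r / 2 * ‖x' - x‖ ^ 2 : ℝ) : EReal) ≤ φ x'

/-- The graph of the `φ`-attentive `ε`-localization of `∂φ` around `(xb, vb)`. -/
def attLocGraph (φ : E → EReal) (xb vb : E) (ε : ℝ) : Set (E × E) :=
  {p | p.2 ∈ limSubdiff φ p.1 ∧ ‖p.1 - xb‖ < ε ∧ ‖p.2 - vb‖ < ε ∧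
      φ p.1 < φ xb + (ε : EReal)}

end InnerDefs

/-- The map `ℝⁿ → ℝᵈ × ℝᶜ` obtained from a permutation (re-indexing) of the
coordinates followed by splitting them into the first `d` and the last `c` ones. -/
def permSplit {n d c : ℕ} (e : Fin n ≃ (Fin d ⊕ Fin c)) (z : Euc n) : Euc d × Euc c :=
  (show Euc d from WithLp.toLp 2 (fun i => z (e.symm (Sum.inl i))),
   show Euc c from WithLp.toLp 2 (fun j => z (e.symm (Sum.inr j))))

/-!
Under strict smoothness the paratingent cone equals the Clarke cone, a convex cone, and it is
symmetric, hence a subspace. Limiting normals are polar to the Clarke cone, so by symmetry they are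
orthogonal to `T^P`; conversely `(T^P)^⊥ ⊆ N̂ ⊆ N` because `T ⊆ T^P`. This gives
`N = (T^P)^⊥ = N̂`.

For the converse one shows that the polar of the limiting normal cone lies in the Clarke cone.
Suppose `w` is polar to `N`, but `d(z_k + t_k w, Ω) ≥ ε t_k` along `z_k → z̄`, `t_k ↓ 0`. Fencing
`σ ↦ d(z_k + σ w, Ω)` by a line of slope `ε / 2` yields a point of the segment whose proximal normal
`v` (a regular normal at the projection) satisfies `⟪v, w⟫ ≥ ε ‖v‖ / 2`; normalizing these
proximal normals gives a limiting normal `u` with `⟪u, w⟫ ≥ ε / 2 > 0`.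
-/

lemma LocallyClosedAt.exists_isClosed_inter_closedBall {X : Type*} [NormedAddCommGroup X]
    {Ω : Set X} {z : X} (h : LocallyClosedAt Ω z) : ∃ ρ > 0, IsClosed (Ω ∩ closedBall z ρ) := by
  obtain ⟨V, hV, -, hΩV⟩ := h
  obtain ⟨ρ, hρ, hball⟩ := nhds_basis_closedBall.mem_iff.mp hV
  refine ⟨ρ, hρ, ?_⟩
  rw [← inter_eq_right.mpr hball, ← inter_assoc]
  exact hΩV.inter isClosed_closedBall

lemma dist_le_two_mul_of_infDist_eq {α : Type*} [PseudoMetricSpace α] {C : Set α} {x y p : α}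
    (hy : y ∈ C) (hp : infDist x C = dist x p) : dist p y ≤ 2 * dist x y := by
  have := hp ▸ infDist_le_dist_of_mem (x := x) hy
  linarith [dist_triangle p x y, dist_comm p x]

section Normed

variable {X : Type*} [NormedAddCommGroup X] [NormedSpace ℝ X] {Ω : Set X} {z w w' : X}

lemma tendsto_add_smul_of_tendsto {zk wk : ℕ → X} {t : ℕ → ℝ} (hz : Tendsto zk atTop (𝓝 z))
    (ht : Tendsto t atTop (𝓝 0)) (hw : Tendsto wk atTop (𝓝 w)) :
    Tendsto (fun k => zk k + t k • wk k) atTop (𝓝 z) := by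
  simpa using hz.add (ht.smul hw)

lemma neg_mem_paraCone (h : w ∈ paraCone Ω z) : -w ∈ paraCone Ω z := by
  obtain ⟨zk, t, wk, hzk, hzt, ht, ht0, hwk, hmem⟩ := h
  refine ⟨fun k => zk k + t k • wk k, t, fun k => -wk k, hmem,
    tendsto_add_smul_of_tendsto hzt ht0 hwk, ht, ht0, hwk.neg, fun k => ?_⟩
  simpa only [smul_neg, add_neg_cancel_right] using hzk k

lemma tanCone_subset_paraCone (hz : z ∈ Ω) : tanCone Ω z ⊆ paraCone Ω z :=
  fun _ ⟨t, wk, ht, ht0, hwk, hmem⟩ =>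
    ⟨fun _ => z, t, wk, fun _ => hz, tendsto_const_nhds, ht, ht0, hwk, hmem⟩

lemma clarkeCone_subset_tanCone (hz : z ∈ Ω) : clarkeCone Ω z ⊆ tanCone Ω z := by
  intro w hw
  obtain ⟨wk, hwk, hmem⟩ := hw (fun _ => z) _ (fun _ => hz) tendsto_const_nhds
    (fun _ => Nat.one_div_pos_of_nat) tendsto_one_div_add_atTop_nhds_zero_nat
  exact ⟨_, wk, fun _ => Nat.one_div_pos_of_nat, tendsto_one_div_add_atTop_nhds_zero_nat, hwk, hmem⟩

lemma clarkeCone_subset_paraCone (hz : z ∈ Ω) : clarkeCone Ω z ⊆ paraCone Ω z :=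
  (clarkeCone_subset_tanCone hz).trans (tanCone_subset_paraCone hz)

lemma zero_mem_clarkeCone : (0 : X) ∈ clarkeCone Ω z := fun _ _ hzk _ _ _ =>
  ⟨fun _ => 0, tendsto_const_nhds, fun k => by simpa using hzk k⟩

lemma add_mem_clarkeCone (hw : w ∈ clarkeCone Ω z) (hw' : w' ∈ clarkeCone Ω z) :
    w + w' ∈ clarkeCone Ω z := by
  intro zk t hzk hz ht ht0
  obtain ⟨wk, hwk, hmem⟩ := hw zk t hzk hz ht ht0
  obtain ⟨wk', hwk', hmem'⟩ := hw' _ t hmem (tendsto_add_smul_of_tendsto hz ht0 hwk) ht ht0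
  refine ⟨fun k => wk k + wk' k, hwk.add hwk', fun k => ?_⟩
  rw [smul_add, ← add_assoc]
  exact hmem' k

lemma smul_mem_clarkeCone {c : ℝ} (hc : 0 < c) (hw : w ∈ clarkeCone Ω z) :
    c • w ∈ clarkeCone Ω z := by
  intro zk t hzk hz ht ht0
  obtain ⟨wk, hwk, hmem⟩ := hw zk (fun k => c * t k) hzk hz (fun k => mul_pos hc (ht k))
    (by simpa using ht0.const_mul c)
  refine ⟨fun k => c • wk k, hwk.const_smul c, fun k => ?_⟩
  rw [smul_smul, mul_comm]
  exact hmem k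

lemma isLinearSubspace_of_neg_mem {s : Set X} (h0 : (0 : X) ∈ s)
    (hadd : ∀ a ∈ s, ∀ b ∈ s, a + b ∈ s) (hsmul : ∀ c : ℝ, 0 < c → ∀ a ∈ s, c • a ∈ s)
    (hneg : ∀ a ∈ s, -a ∈ s) : IsLinearSubspace s := by
  refine ⟨{ carrier := s
            add_mem' := (hadd _ · _ ·)
            zero_mem' := h0
            smul_mem' := ?_ }, rfl⟩
  intro c a ha
  rcases lt_trichotomy c 0 with hc | rfl | hc
  · simpa using hsmul (-c) (neg_pos.2 hc) (-a) (hneg a ha)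
  · simpa using h0
  · exact hsmul c hc a ha

lemma StrictlySmoothAt.isLinearSubspace_paraCone (h : StrictlySmoothAt Ω z) :
    IsLinearSubspace (paraCone Ω z) := by
  have h : clarkeCone Ω z = paraCone Ω z := h
  rw [← h]
  exact isLinearSubspace_of_neg_mem zero_mem_clarkeCone (fun _ ha _ hb => add_mem_clarkeCone ha hb)
    (fun _ hc _ ha => smul_mem_clarkeCone hc ha) (fun _ ha => h ▸ neg_mem_paraCone (h ▸ ha))

lemma slope_infDist_add_smul_le (C : Set X) {s τ : ℝ} (hsτ : s < τ) :
    slope (fun σ => infDist (z + σ • w) C) s τ ≤ ‖w‖ := by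
  rw [slope_def_field, div_le_iff₀ (sub_pos.2 hsτ)]
  have := infDist_le_infDist_add_dist (s := C) (x := z + τ • w) (y := z + s • w)
  rw [dist_add_left, dist_eq_norm, ← sub_smul, norm_smul, Real.norm_of_nonneg (sub_pos.2 hsτ).le]
    at this
  linarith

lemma exists_tendsto_add_smul_mem_of_infDist [ProperSpace X] {C : Set X} (hC : IsClosed C)
    (hCne : C.Nonempty) {zk : ℕ → X} {t : ℕ → ℝ} (ht : ∀ k, 0 < t k)
    (h : Tendsto (fun k => infDist (zk k + t k • w) C / t k) atTop (𝓝 0)) :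
    ∃ wk : ℕ → X, Tendsto wk atTop (𝓝 w) ∧ ∀ k, zk k + t k • wk k ∈ C := by
  choose q hqC hqd using fun k => hC.exists_infDist_eq_dist hCne (zk k + t k • w)
  refine ⟨fun k => (t k)⁻¹ • (q k - zk k),
    tendsto_iff_norm_sub_tendsto_zero.2 (h.congr fun k => ?_),
    fun k => by simpa [smul_inv_smul₀ (ht k).ne'] using hqC k⟩
  have : (t k)⁻¹ • (q k - zk k) - w = (t k)⁻¹ • (q k - (zk k + t k • w)) := by
    rw [smul_sub, smul_sub, smul_add, inv_smul_smul₀ (ht k).ne']; abel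
  rw [this, norm_smul, norm_inv, Real.norm_of_nonneg (ht k).le, ← dist_eq_norm, dist_comm, ← hqd k,
    inv_mul_eq_div]

end Normed

section Inner

variable {E : Type*} [NormedAddCommGroup E] [InnerProductSpace ℝ E] {Ω C : Set E} {z zb v w : E}

lemma smul_mem_regNormal {c : ℝ} (hc : 0 ≤ c) (hv : v ∈ regNormal Ω z) :
    c • v ∈ regNormal Ω z := fun u hu => by
  rw [real_inner_smul_left]
  exact mul_nonpos_of_nonneg_of_nonpos hc (hv u hu)

lemma regNormal_subset_limNormal (hz : z ∈ Ω) : regNormal Ω z ⊆ limNormal Ω z := fun v hv =>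
  ⟨fun _ => z, fun _ => v, fun _ => hz, tendsto_const_nhds, fun _ => hv, tendsto_const_nhds⟩

lemma isLinearSubspace_orthSet (s : Set E) : IsLinearSubspace (orthSet s) := by
  refine ⟨{ carrier := orthSet s, add_mem' := ?_, zero_mem' := ?_, smul_mem' := ?_ }, rfl⟩
  · intro a b ha hb w hw
    rw [inner_add_left, ha w hw, hb w hw, add_zero]
  · exact fun w _ => inner_zero_left w
  · intro c a ha w hw
    rw [real_inner_smul_left, ha w hw, mul_zero]

lemma orthSet_paraCone_subset_regNormal (hz : z ∈ Ω) : orthSet (paraCone Ω z) ⊆ regNormal Ω z :=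
  fun _ hv w hw => (hv w (tanCone_subset_paraCone hz hw)).le

lemma exists_inner_le_of_mem_regNormal [ProperSpace E] (hv : v ∈ regNormal Ω z) {ε : ℝ}
    (hε : 0 < ε) : ∃ δ > 0, ∀ q ∈ Ω, ‖q - z‖ < δ → ⟪v, q - z⟫ ≤ ε * ‖q - z‖ := by
  by_contra! h
  choose q hqΩ hqz hqv using fun k : ℕ => h (1 / ((k : ℝ) + 1)) Nat.one_div_pos_of_nat
  have hne : ∀ k, q k - z ≠ 0 := fun k hk => by simpa [hk] using hqv k
  have hq : Tendsto (fun k => ‖q k - z‖) atTop (𝓝 0) := squeeze_zero (fun _ => norm_nonneg _)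
    (fun k => (hqz k).le) tendsto_one_div_add_atTop_nhds_zero_nat
  obtain ⟨u, -, φ, hφ, hu⟩ := (isCompact_sphere (0 : E) 1).tendsto_subseq
    (x := fun k => ‖q k - z‖⁻¹ • (q k - z))
    (fun k => mem_sphere_zero_iff_norm.2 (norm_smul_inv_norm (hne k)))
  have hu_tan : u ∈ tanCone Ω z := by
    refine ⟨fun j => ‖q (φ j) - z‖, _, fun j => norm_pos_iff.2 (hne _),
      hq.comp hφ.tendsto_atTop, hu, fun j => ?_⟩
    simpa [smul_inv_smul₀ (norm_ne_zero_iff.2 (hne (φ j)))] using hqΩ (φ j)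
  have hgt : ∀ k, ε < ⟪v, ‖q k - z‖⁻¹ • (q k - z)⟫ := fun k => by
    rw [real_inner_smul_right, ← div_eq_inv_mul, lt_div_iff₀ (norm_pos_iff.2 (hne k))]
    exact hqv k
  have := ge_of_tendsto (tendsto_const_nhds.inner hu) (Eventually.of_forall fun j => (hgt (φ j)).le)
  linarith [hv u hu_tan]

lemma inner_nonpos_of_mem_limNormal_of_mem_clarkeCone [ProperSpace E] (hv : v ∈ limNormal Ω zb)
    (hw : w ∈ clarkeCone Ω zb) : ⟪v, w⟫ ≤ 0 := by
  obtain ⟨zk, vk, hzkΩ, hzk, hvk, hvlim⟩ := hv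
  set ε : ℕ → ℝ := fun k => 1 / ((k : ℝ) + 1)
  have hε : ∀ k, 0 < ε k := fun _ => Nat.one_div_pos_of_nat
  have hε0 : Tendsto ε atTop (𝓝 0) := tendsto_one_div_add_atTop_nhds_zero_nat
  choose δ hδ hδle using fun k => exists_inner_le_of_mem_regNormal (hvk k) (hε k)
  -- the step `t k` is small enough that `zk k + t k • wk k` stays `δ k`-close to `zk k`
  set t : ℕ → ℝ := fun k => min (δ k / (‖w‖ + 1)) (ε k)
  have ht : ∀ k, 0 < t k := fun k => lt_min (div_pos (hδ k) (by positivity)) (hε k)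
  have ht0 : Tendsto t atTop (𝓝 0) :=
    squeeze_zero (fun k => (ht k).le) (fun _ => min_le_right _ _) hε0
  obtain ⟨wk, hwk, hmem⟩ := hw zk t hzkΩ hzk ht ht0
  have hbound : ∀ᶠ k in atTop, ⟪vk k, wk k⟫ ≤ ε k * ‖wk k‖ := by
    filter_upwards [hwk.norm.eventually (gt_mem_nhds (lt_add_one ‖w‖))] with k hk
    have hstep : ‖zk k + t k • wk k - zk k‖ < δ k := by
      rw [add_sub_cancel_left, norm_smul, Real.norm_of_nonneg (ht k).le]
      calc t k * ‖wk k‖ ≤ δ k / (‖w‖ + 1) * ‖wk k‖ := by gcongr; exact min_le_left _ _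
        _ < δ k / (‖w‖ + 1) * (‖w‖ + 1) := by gcongr; exact div_pos (hδ k) (by positivity)
        _ = δ k := div_mul_cancel₀ _ (by positivity)
    have := hδle k _ (hmem k) hstep
    rw [add_sub_cancel_left, real_inner_smul_right, norm_smul, Real.norm_of_nonneg (ht k).le,
      mul_left_comm] at this
    exact le_of_mul_le_mul_left this (ht k)
  exact le_of_tendsto_of_tendsto (hvlim.inner hwk) (by simpa using hε0.mul hwk.norm) hbound

lemma sub_mem_regNormal_of_forall_dist_le {x p : E} {U : Set E} (hU : U ∈ 𝓝 p)
    (hnear : ∀ q ∈ Ω ∩ U, dist x p ≤ dist x q) : x - p ∈ regNormal Ω p := by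
  rintro u ⟨τ, uk, hτ, hτ0, huk, hmem⟩
  have hkey : ∀ᶠ k in atTop, ⟪x - p, uk k⟫ ≤ τ k / 2 * ‖uk k‖ ^ 2 := by
    filter_upwards [tendsto_add_smul_of_tendsto tendsto_const_nhds hτ0 huk hU] with k hk
    have hsq : ‖x - p‖ ^ 2 ≤ ‖x - p - τ k • uk k‖ ^ 2 := by
      have := hnear _ ⟨hmem k, hk⟩
      rw [dist_eq_norm, dist_eq_norm, sub_add_eq_sub_sub] at this
      gcongr
    rw [norm_sub_sq_real (x - p), real_inner_smul_right, norm_smul,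
      Real.norm_of_nonneg (hτ k).le] at hsq
    nlinarith [hτ k]
  exact le_of_tendsto_of_tendsto (tendsto_const_nhds.inner huk)
    (by simpa using (hτ0.div_const 2).mul (huk.norm.pow 2)) hkey

lemma exists_mem_limNormal_le_inner [ProperSpace E] {p v : ℕ → E} {ε : ℝ} (hpΩ : ∀ k, p k ∈ Ω)
    (hp : Tendsto p atTop (𝓝 zb)) (hv : ∀ k, v k ∈ regNormal Ω (p k)) (hv0 : ∀ k, v k ≠ 0)
    (hvw : ∀ k, ε * ‖v k‖ ≤ ⟪v k, w⟫) : ∃ u ∈ limNormal Ω zb, ε ≤ ⟪u, w⟫ := by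
  obtain ⟨u, -, φ, hφ, hu⟩ := (isCompact_sphere (0 : E) 1).tendsto_subseq
    (x := fun k => ‖v k‖⁻¹ • v k) (fun k => mem_sphere_zero_iff_norm.2 (norm_smul_inv_norm (hv0 k)))
  refine ⟨u, ⟨p ∘ φ, _, fun j => hpΩ _, hp.comp hφ.tendsto_atTop,
    fun j => smul_mem_regNormal (inv_nonneg.2 (norm_nonneg _)) (hv _), hu⟩, ?_⟩
  refine ge_of_tendsto (hu.inner tendsto_const_nhds) (Eventually.of_forall fun j => ?_)
  rw [Function.comp_apply, real_inner_smul_left, ← div_eq_inv_mul,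
    le_div_iff₀ (norm_pos_iff.2 (hv0 _))]
  exact hvw _

lemma eventually_slope_infDist_add_smul_lt {p : E} {s r : ℝ} (hp : p ∈ C)
    (hdist : infDist (z + s • w) C = dist (z + s • w) p) (hne : z + s • w ≠ p)
    (hr : ⟪z + s • w - p, w⟫ / ‖z + s • w - p‖ < r) :
    ∀ᶠ τ in 𝓝[>] s, slope (fun σ => infDist (z + σ • w) C) s τ < r := by
  have hv : ‖z + s • w - p‖ ≠ 0 := norm_ne_zero_iff.2 (sub_ne_zero.2 hne)
  have hderiv : HasDerivAt (fun σ : ℝ => ‖z + σ • w - p‖)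
      (⟪z + s • w - p, w⟫ / ‖z + s • w - p‖) s := by
    have hsq := ((((hasDerivAt_id s).smul_const w).const_add z).sub_const p).norm_sq.sqrt
      (pow_ne_zero 2 hv)
    simp only [id, one_smul, Real.sqrt_sq (norm_nonneg _)] at hsq
    convert hsq using 1
    field_simp
  filter_upwards [(hderiv.tendsto_slope.mono_left (nhdsGT_le_nhdsNE s)).eventually
    (gt_mem_nhds hr), self_mem_nhdsWithin] with τ hτ (hsτ : s < τ)
  refine lt_of_le_of_lt ?_ hτ
  rw [slope_def_field, slope_def_field, hdist, dist_eq_norm]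
  gcongr
  exact (infDist_le_dist_of_mem hp).trans_eq (dist_eq_norm _ _)

lemma exists_proximal_le_inner [ProperSpace E] (hC : IsClosed C) (hz : z ∈ C) {t ε : ℝ}
    (ht : 0 ≤ t) (hε : 0 ≤ ε) (hfar : ε * t < infDist (z + t • w) C) :
    ∃ s ∈ Ico 0 t, ∃ p ∈ C, infDist (z + s • w) C = dist (z + s • w) p ∧ z + s • w ≠ p ∧
      ε * ‖z + s • w - p‖ ≤ ⟪z + s • w - p, w⟫ := by
  by_contra! hcon
  set g : ℝ → ℝ := fun σ => infDist (z + σ • w) C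
  have hg : Continuous g :=
    (continuous_infDist_pt C).comp (continuous_const.add (continuous_id.smul continuous_const))
  choose p hpC hpd using fun σ : ℝ => hC.exists_infDist_eq_dist ⟨z, hz⟩ (z + σ • w)
  have hne : ∀ σ, g σ ≠ 0 → z + σ • w ≠ p σ := fun σ hσ h => hσ (by simp [g, hpd σ, h])
  classical
  -- an upper bound for the right Dini derivative of `g`
  set g' : ℝ → ℝ := fun σ =>
    if g σ = 0 then ‖w‖ else ⟪z + σ • w - p σ, w⟫ / ‖z + σ • w - p σ‖
  have hslope : ∀ σ ∈ Ico 0 t, ∀ r, g' σ < r → ∃ᶠ τ in 𝓝[>] σ, slope g σ τ < r := by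
    intro σ _ r hr
    by_cases hσ : g σ = 0
    · simp only [g', hσ, if_true] at hr
      refine Eventually.frequently ?_
      filter_upwards [self_mem_nhdsWithin] with τ (hτ : σ < τ)
      exact (slope_infDist_add_smul_le C hτ).trans_lt hr
    · simp only [g', hσ, if_false] at hr
      exact (eventually_slope_infDist_add_smul_lt (hpC σ) (hpd σ) (hne σ hσ) hr).frequently
  set η := (g t - ε * t) / 2
  have hη : 0 < η := by simp only [η]; linarith
  -- where `g` touches the line `ε σ + η` it is positive, and the proximal quotient is `< ε`
  have hbound : ∀ σ ∈ Ico 0 t, g σ = ε * σ + η → g' σ < ε := by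
    intro σ hσ hgσ
    have hpos : g σ ≠ 0 := by rw [hgσ]; nlinarith [hσ.1]
    simp only [g', hpos, if_false]
    rw [div_lt_iff₀ (norm_pos_iff.2 (sub_ne_zero.2 (hne σ hpos)))]
    exact hcon σ hσ (p σ) (hpC σ) (hpd σ) (hne σ hpos)
  have hfence : g t ≤ ε * t + η :=
    image_le_of_liminf_slope_right_lt_deriv_boundary hg.continuousOn hslope
      (by simp [g, infDist_zero_of_mem hz, hη.le])
      (fun σ => by simpa using ((hasDerivAt_id σ).const_mul ε).add_const η) hbound
      (right_mem_Icc.2 ht)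
  simp only [η] at hfence
  linarith

lemma tendsto_infDist_div_of_forall_limNormal_inner_nonpos [ProperSpace E] {ρ : ℝ} (hρ : 0 < ρ)
    (hC : IsClosed (Ω ∩ closedBall zb ρ)) (hw : ∀ v ∈ limNormal Ω zb, ⟪v, w⟫ ≤ 0)
    {zk : ℕ → E} {t : ℕ → ℝ} (hzkΩ : ∀ k, zk k ∈ Ω) (hzk : Tendsto zk atTop (𝓝 zb))
    (ht : ∀ k, 0 < t k) (ht0 : Tendsto t atTop (𝓝 0)) :
    Tendsto (fun k => infDist (zk k + t k • w) (Ω ∩ closedBall zb ρ) / t k) atTop (𝓝 0) := by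
  set C := Ω ∩ closedBall zb ρ
  refine tendsto_order.2 ⟨fun a ha => Eventually.of_forall fun k =>
    ha.trans_le (div_nonneg infDist_nonneg (ht k).le), fun ε hε => ?_⟩
  by_contra hfar
  have hsmall : Tendsto (fun k => dist (zk k) zb + 2 * (t k * ‖w‖)) atTop (𝓝 0) := by
    simpa using (tendsto_iff_dist_tendsto_zero.1 hzk).add ((ht0.mul_const ‖w‖).const_mul 2)
  obtain ⟨φ, hφ, hφP⟩ := extraction_of_frequently_atTop
    ((not_eventually.1 hfar).and_eventually (hsmall.eventually (gt_mem_nhds hρ)))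
  choose hfarφ hnearφ using hφP
  have hzC : ∀ j, zk (φ j) ∈ C := fun j =>
    ⟨hzkΩ _, mem_closedBall.2 (by nlinarith [norm_nonneg w, ht (φ j), hnearφ j])⟩
  have hprox := fun j => exists_proximal_le_inner (w := w) hC (hzC j) (ht (φ j)).le (half_pos hε).le
    (by have := hfarφ j; rw [not_lt, le_div_iff₀ (ht _)] at this; nlinarith [ht (φ j)])
  choose s hs p hpC hpd hne hpw using hprox
  have hpzb : ∀ j, dist (p j) zb ≤ dist (zk (φ j)) zb + 2 * (t (φ j) * ‖w‖) := fun j => by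
    have h1 := dist_le_two_mul_of_infDist_eq (hzC j) (hpd j)
    rw [dist_self_add_left, norm_smul, Real.norm_of_nonneg (hs j).1] at h1
    nlinarith [dist_triangle (p j) (zk (φ j)) zb, (hs j).2, norm_nonneg w]
  have hp : Tendsto p atTop (𝓝 zb) := tendsto_iff_dist_tendsto_zero.2 <|
    squeeze_zero (fun _ => dist_nonneg) hpzb (hsmall.comp hφ.tendsto_atTop)
  have hreg : ∀ j, zk (φ j) + s j • w - p j ∈ regNormal Ω (p j) := fun j =>
    sub_mem_regNormal_of_forall_dist_le
      (closedBall_mem_nhds_of_mem (mem_ball.2 ((hpzb j).trans_lt (hnearφ j))))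
      (fun q hq => (hpd j).symm.trans_le (infDist_le_dist_of_mem hq))
  obtain ⟨u, hu, hεu⟩ := exists_mem_limNormal_le_inner (fun j => (hpC j).1) hp hreg
    (fun j => sub_ne_zero.2 (hne j)) hpw
  linarith [hw u hu]

lemma mem_clarkeCone_of_forall_limNormal_inner_nonpos [ProperSpace E] (hz : zb ∈ Ω)
    (hloc : LocallyClosedAt Ω zb) (hw : ∀ v ∈ limNormal Ω zb, ⟪v, w⟫ ≤ 0) : w ∈ clarkeCone Ω zb := by
  obtain ⟨ρ, hρ, hC⟩ := hloc.exists_isClosed_inter_closedBall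
  intro zk t hzkΩ hzk ht ht0
  obtain ⟨wk, hwk, hmem⟩ := exists_tendsto_add_smul_mem_of_infDist hC
    ⟨zb, hz, mem_closedBall_self hρ.le⟩ ht
    (tendsto_infDist_div_of_forall_limNormal_inner_nonpos hρ hC hw hzkΩ hzk ht ht0)
  exact ⟨wk, hwk, fun k => (hmem k).1⟩

end Inner

section StrictSmoothness

variable {E : Type*} [NormedAddCommGroup E] [InnerProductSpace ℝ E] [ProperSpace E]
  {Ω : Set E} {z : E}

lemma StrictlySmoothAt.limNormal_subset_orthSet_paraCone (h : StrictlySmoothAt Ω z) :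
    limNormal Ω z ⊆ orthSet (paraCone Ω z) := by
  have h : clarkeCone Ω z = paraCone Ω z := h
  intro v hv w hw
  have hle := inner_nonpos_of_mem_limNormal_of_mem_clarkeCone hv (h ▸ hw)
  have hge := inner_nonpos_of_mem_limNormal_of_mem_clarkeCone hv (h ▸ neg_mem_paraCone hw)
  rw [inner_neg_right] at hge
  linarith

lemma StrictlySmoothAt.orthSet_paraCone_eq_limNormal (h : StrictlySmoothAt Ω z) (hz : z ∈ Ω) :
    orthSet (paraCone Ω z) = limNormal Ω z :=
  ((orthSet_paraCone_subset_regNormal hz).trans (regNormal_subset_limNormal hz)).antisymm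
    h.limNormal_subset_orthSet_paraCone

lemma StrictlySmoothAt.normallyRegularAt (h : StrictlySmoothAt Ω z) (hz : z ∈ Ω) :
    NormallyRegularAt Ω z :=
  (regNormal_subset_limNormal hz).antisymm
    (h.limNormal_subset_orthSet_paraCone.trans (orthSet_paraCone_subset_regNormal hz))

lemma strictlySmoothAt_of_orthSet_paraCone_eq_limNormal (hz : z ∈ Ω) (hloc : LocallyClosedAt Ω z)
    (h : orthSet (paraCone Ω z) = limNormal Ω z) : StrictlySmoothAt Ω z :=
  (clarkeCone_subset_paraCone hz).antisymm fun w hw =>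
    mem_clarkeCone_of_forall_limNormal_inner_nonpos hz hloc fun v hv =>
      ((h.symm ▸ hv : v ∈ orthSet (paraCone Ω z)) w hw).le

end StrictSmoothness

/-- Lemma 2.2: characterization of strict smoothness via the
paratingent cone and the limiting normal cone. -/
theorem stmt_1 {n : ℕ} (Ω : Set (Euc n)) (zb : Euc n) (hz : zb ∈ Ω)
    (hloc : LocallyClosedAt Ω zb) :
    (StrictlySmoothAt Ω zb ↔
      (IsLinearSubspace (paraCone Ω zb) ∧ IsLinearSubspace (limNormal Ω zb) ∧
        orthSet (paraCone Ω zb) = limNormal Ω zb)) ∧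
    (StrictlySmoothAt Ω zb → NormallyRegularAt Ω zb) := by
  refine ⟨⟨fun hss => ?_, fun ⟨_, _, horth⟩ =>
    strictlySmoothAt_of_orthSet_paraCone_eq_limNormal hz hloc horth⟩,
    fun hss => hss.normallyRegularAt hz⟩
  have horth := hss.orthSet_paraCone_eq_limNormal hz
  exact ⟨hss.isLinearSubspace_paraCone, horth ▸ isLinearSubspace_orthSet _, horth⟩
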